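/- Let r^1,...,r^k ∈ Z^n be linearly independent with L = span{r^1,...,r^k}, and suppose (r^i)* − (r^j)* ∈ (L ∩ Z^n)* for some i ≠ j. Then ICR(pos{r^1,...,r^k}) ≤ max{ ICR(pos{r^1,...,r^k}|(r^i)^⊥), ICR(pos{r^1,...,r^k}|(r^j)^⊥) } + 1, where the projected integer Carathéodory ranks are taken with respect to the projected lattices (L ∩ Z^n)|(r^i)^⊥ and (L ∩ Z^n)|(r^j)^⊥. -/

import Mathlib

open scoped BigOperators

noncomputable section

namespace ICRPaper

/-- A real vector is integral if every coordinate is an integer. -/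
def IsIntegral {n : ℕ} (x : Fin n → ℝ) : Prop := ∀ i, ∃ z : ℤ, x i = (z : ℝ)

/-- The lattice of integer points of `ℝ^n`. -/
def intLattice (n : ℕ) : Set (Fin n → ℝ) := {x | IsIntegral x}

/-- Standard dot product on `ℝ^n`. -/
def dot {n : ℕ} (x y : Fin n → ℝ) : ℝ := ∑ i, x i * y i

/-- `pos r`: the cone of non-negative real combinations of the vectors `r i`. -/
def pos {n : ℕ} {ι : Type} [Fintype ι] (r : ι → (Fin n → ℝ)) : Set (Fin n → ℝ) :=
  {x | ∃ lam : ι → ℝ, (∀ i, 0 ≤ lam i) ∧ x = ∑ i, lam i • r i}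

/-- Lattice points (w.r.t. a lattice `Λ`) in the half-open parallelepiped spanned by `r`. -/
def parL {n : ℕ} {ι : Type} [Fintype ι] (Λ : Set (Fin n → ℝ)) (r : ι → (Fin n → ℝ)) :
    Set (Fin n → ℝ) :=
  {x | (∃ lam : ι → ℝ, (∀ i, 0 ≤ lam i ∧ lam i < 1) ∧ x = ∑ i, lam i • r i) ∧ x ∈ Λ}

/-- Integer points in the half-open parallelepiped spanned by `r`. -/
def par {n : ℕ} {ι : Type} [Fintype ι] (r : ι → (Fin n → ℝ)) : Set (Fin n → ℝ) :=
  parL (intLattice n) r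

/-- `h` is a Hilbert basis element of the cone `C` with respect to the lattice `Λ`:
a nonzero lattice vector of `C` which is not the sum of two nonzero lattice vectors of `C`. -/
def IsHilbertL {n : ℕ} (Λ : Set (Fin n → ℝ)) (C : Set (Fin n → ℝ)) (h : Fin n → ℝ) : Prop :=
  h ∈ C ∧ h ∈ Λ ∧ h ≠ 0 ∧
    ∀ a b : Fin n → ℝ, a ∈ C → b ∈ C → a ∈ Λ → b ∈ Λ → a ≠ 0 → b ≠ 0 → h ≠ a + b

/-- The integer Carathéodory rank of `C` with respect to the lattice `Λ`:
the maximum over lattice points `z ∈ C` of the minimal number of Hilbert basis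
elements needed to write `z` as a non-negative integral combination. -/
def ICRL {n : ℕ} (Λ : Set (Fin n → ℝ)) (C : Set (Fin n → ℝ)) : ℕ :=
  sSup {m : ℕ | ∃ z ∈ C, z ∈ Λ ∧
    m = sInf {k : ℕ | ∃ h : Fin k → (Fin n → ℝ), ∃ c : Fin k → ℕ,
      (∀ i, IsHilbertL Λ C (h i)) ∧ z = ∑ i, (c i : ℝ) • h i}}

/-- The integer Carathéodory rank with respect to the integer lattice `ℤ^n`. -/
def ICR {n : ℕ} (C : Set (Fin n → ℝ)) : ℕ := ICRL (intLattice n) C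

/-- The lattice `L ∩ ℤ^n`, where `L` is the real span of the vectors `r i`. -/
def latticeOf {n : ℕ} {ι : Type} [Fintype ι] (r : ι → (Fin n → ℝ)) : Set (Fin n → ℝ) :=
  {x | x ∈ Submodule.span ℝ (Set.range r) ∧ IsIntegral x}

/-- The dual lattice `Λ* = {x ∈ lin Λ : ⟨y, x⟩ ∈ ℤ for all y ∈ Λ}`. -/
def dualLattice {n : ℕ} (Λ : Set (Fin n → ℝ)) : Set (Fin n → ℝ) :=
  {x | x ∈ Submodule.span ℝ Λ ∧ ∀ y ∈ Λ, ∃ m : ℤ, dot y x = (m : ℝ)}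

/-- Orthogonal projection onto the orthogonal complement of `v`. -/
def projPerp {n : ℕ} (v : Fin n → ℝ) (x : Fin n → ℝ) : Fin n → ℝ :=
  x - (dot x v / dot v v) • v

/-!
Write `λ_l x = dot x (rstar l)` for the coordinates on `L`, `π` for the projection along `r i`,
and let `c • r i` be the primitive lattice vector on the ray of `r i`; by symmetry
`λ_j z ≤ λ_i z`. Every Hilbert basis element `h` of the projected cone has an integral lift `g`
with `0 ≤ λ_i g < c`, and such a lift is a Hilbert basis element of `pos r`. Lifting a shortest
representation `π z = ∑ m_t h_t` leaves a remainder `z - ∑ m_t g_t` on the line `ℝ r i` whose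
`j`-th coordinate vanishes. As `λ_i g - λ_j g` is an integer (the dual lattice hypothesis) below
`1`, we get `λ_i g_t ≤ λ_j g_t`, so the remainder is a natural multiple of `c • r i`: one more
Hilbert basis element.

The projected rank is a genuine maximum, not the junk value of an unbounded `sSup`: the Hilbert
basis elements of the projected cone have coordinates at most `1`, so there are finitely many.
-/

open Set Submodule

variable {n : ℕ}

section Dot

lemma dot_zero_left (y : Fin n → ℝ) : dot 0 y = 0 := zero_dotProduct y

lemma dot_add_left (x y z : Fin n → ℝ) : dot (x + y) z = dot x z + dot y z := add_dotProduct x y z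

lemma dot_sub_left (x y z : Fin n → ℝ) : dot (x - y) z = dot x z - dot y z := sub_dotProduct x y z

lemma dot_sub_right (x y z : Fin n → ℝ) : dot x (y - z) = dot x y - dot x z := dotProduct_sub x y z

lemma dot_smul_left (s : ℝ) (x y : Fin n → ℝ) : dot (s • x) y = s * dot x y :=
  smul_dotProduct s x y

lemma dot_sum_left {ι : Type*} (s : Finset ι) (f : ι → Fin n → ℝ) (y : Fin n → ℝ) :
    dot (∑ t ∈ s, f t) y = ∑ t ∈ s, dot (f t) y :=
  sum_dotProduct s f y

lemma dot_sum_right {ι : Type*} (s : Finset ι) (x : Fin n → ℝ) (f : ι → Fin n → ℝ) :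
    dot x (∑ t ∈ s, f t) = ∑ t ∈ s, dot x (f t) :=
  dotProduct_sum x s f

end Dot

section Projection

def projPerpₗ (v : Fin n → ℝ) : (Fin n → ℝ) →ₗ[ℝ] (Fin n → ℝ) where
  toFun := projPerp v
  map_add' x y := by
    simp only [projPerp, dot_add_left, add_div, add_smul]
    abel
  map_smul' s x := by
    simp only [projPerp, dot_smul_left, smul_sub, smul_smul, mul_div_assoc, RingHom.id_apply]

lemma projPerp_zero (v : Fin n → ℝ) : projPerp v 0 = 0 := map_zero (projPerpₗ v)

lemma projPerp_add (v x y : Fin n → ℝ) : projPerp v (x + y) = projPerp v x + projPerp v y :=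
  map_add (projPerpₗ v) x y

lemma projPerp_sub (v x y : Fin n → ℝ) : projPerp v (x - y) = projPerp v x - projPerp v y :=
  map_sub (projPerpₗ v) x y

lemma projPerp_smul (v : Fin n → ℝ) (s : ℝ) (x : Fin n → ℝ) :
    projPerp v (s • x) = s • projPerp v x :=
  map_smul (projPerpₗ v) s x

lemma projPerp_sum (v : Fin n → ℝ) {ι : Type*} (s : Finset ι) (f : ι → Fin n → ℝ) :
    projPerp v (∑ t ∈ s, f t) = ∑ t ∈ s, projPerp v (f t) :=
  map_sum (projPerpₗ v) f s

lemma projPerp_self {v : Fin n → ℝ} (hv : v ≠ 0) : projPerp v v = 0 := by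
  have : dot v v ≠ 0 := fun h => hv (dotProduct_self_eq_zero.mp h)
  simp [projPerp, div_self this]

lemma projPerp_smul_self {v : Fin n → ℝ} (hv : v ≠ 0) (s : ℝ) : projPerp v (s • v) = 0 := by
  rw [projPerp_smul, projPerp_self hv, smul_zero]

lemma dot_projPerp (v x w : Fin n → ℝ) :
    dot (projPerp v x) w = dot x w - dot x v / dot v v * dot v w := by
  rw [projPerp, dot_sub_left, dot_smul_left]

end Projection

section Integral

def integralPoints (n : ℕ) : AddSubgroup (Fin n → ℝ) where
  carrier := intLattice n
  add_mem' {x y} hx hy a := by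
    obtain ⟨p, hp⟩ := hx a
    obtain ⟨q, hq⟩ := hy a
    exact ⟨p + q, by simp [hp, hq]⟩
  zero_mem' _ := ⟨0, by simp⟩
  neg_mem' {x} hx a := by
    obtain ⟨p, hp⟩ := hx a
    exact ⟨-p, by simp [hp]⟩

lemma IsIntegral.sub {x y : Fin n → ℝ} (hx : IsIntegral x) (hy : IsIntegral y) :
    IsIntegral (x - y) :=
  (integralPoints n).sub_mem hx hy

lemma IsIntegral.intCast_smul {x : Fin n → ℝ} (hx : IsIntegral x) (m : ℤ) :
    IsIntegral ((m : ℝ) • x) := by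
  rw [Int.cast_smul_eq_zsmul]
  exact (integralPoints n).zsmul_mem hx m

lemma IsIntegral.sum_natCast_smul {ι : Type*} (s : Finset ι) (m : ι → ℕ) {f : ι → Fin n → ℝ}
    (hf : ∀ t, IsIntegral (f t)) : IsIntegral (∑ t ∈ s, (m t : ℝ) • f t) := by
  simp only [Nat.cast_smul_eq_nsmul]
  exact (integralPoints n).sum_mem fun t _ => (integralPoints n).nsmul_mem (hf t) (m t)

lemma finite_isIntegral_abs_le (B : Fin n → ℝ) :
    {u : Fin n → ℝ | IsIntegral u ∧ ∀ a, |u a| ≤ B a}.Finite := by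
  refine (Set.Finite.pi fun a => ((Set.finite_Icc (-⌈B a⌉) ⌈B a⌉).image
    ((↑) : ℤ → ℝ))).subset ?_
  rintro u ⟨hu, hB⟩ a -
  obtain ⟨z, hz⟩ := hu a
  have hzB := abs_le.mp (hz ▸ hB a)
  have hceil := Int.le_ceil (B a)
  refine ⟨z, ⟨(Int.cast_le (R := ℝ)).mp ?_, (Int.cast_le (R := ℝ)).mp ?_⟩, hz.symm⟩ <;>
    push_cast <;> linarith

end Integral

section HilbertRepresentation

variable {Λ C : Set (Fin n → ℝ)}

def hilbertRepLengths (Λ C : Set (Fin n → ℝ)) (z : Fin n → ℝ) : Set ℕ :=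
  {q | ∃ h : Fin q → (Fin n → ℝ), ∃ c : Fin q → ℕ,
    (∀ t, IsHilbertL Λ C (h t)) ∧ z = ∑ t, (c t : ℝ) • h t}

lemma sInf_hilbertRepLengths_le_ICRL {N : ℕ}
    (hN : ∀ z ∈ C, z ∈ Λ → ∃ q ∈ hilbertRepLengths Λ C z, q ≤ N)
    {z : Fin n → ℝ} (hzC : z ∈ C) (hzΛ : z ∈ Λ) :
    sInf (hilbertRepLengths Λ C z) ≤ ICRL Λ C := by
  refine le_csSup ⟨N, ?_⟩ ⟨z, hzC, hzΛ, rfl⟩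
  rintro _ ⟨y, hyC, hyΛ, rfl⟩
  obtain ⟨q, hq, hqN⟩ := hN y hyC hyΛ
  exact (Nat.sInf_le hq).trans hqN

lemma ICRL_le_of_forall {a : ℕ}
    (h : ∀ z ∈ C, z ∈ Λ → sInf (hilbertRepLengths Λ C z) ≤ a) : ICRL Λ C ≤ a := by
  refine csSup_le' ?_
  rintro _ ⟨z, hzC, hzΛ, rfl⟩
  exact h z hzC hzΛ

lemma mem_closure_isHilbertL (s : Fin n → ℝ)
    (hpos : ∀ y ∈ C, y ≠ 0 → 0 < dot y s)
    (hfin : ∀ M, {y | y ∈ C ∧ y ∈ Λ ∧ dot y s ≤ M}.Finite)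
    {y : Fin n → ℝ} (hyC : y ∈ C) (hyΛ : y ∈ Λ) :
    y ∈ AddSubmonoid.closure {h | IsHilbertL Λ C h} := by
  by_contra hy
  -- a counterexample `x` with `dot x s` minimal
  obtain ⟨x, ⟨hxC, hxΛ, hxy, hx⟩, hmin⟩ := Set.exists_min_image
    {x | x ∈ C ∧ x ∈ Λ ∧ dot x s ≤ dot y s ∧ x ∉ AddSubmonoid.closure {h | IsHilbertL Λ C h}}
    (dot · s) ((hfin (dot y s)).subset fun x hx => ⟨hx.1, hx.2.1, hx.2.2.1⟩)
    ⟨y, hyC, hyΛ, le_rfl, hy⟩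
  have hx0 : x ≠ 0 := fun h => hx (h ▸ zero_mem _)
  obtain ⟨a, b, haC, hbC, haΛ, hbΛ, ha0, hb0, rfl⟩ :
      ∃ a b, a ∈ C ∧ b ∈ C ∧ a ∈ Λ ∧ b ∈ Λ ∧ a ≠ 0 ∧ b ≠ 0 ∧ x = a + b := by
    by_contra! h
    exact hx (AddSubmonoid.subset_closure ⟨hxC, hxΛ, hx0, h⟩)
  have hsmaller : ∀ u ∈ C, u ∈ Λ → dot u s < dot (a + b) s →
      u ∈ AddSubmonoid.closure {h | IsHilbertL Λ C h} := fun u huC huΛ hlt => by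
    by_contra hu
    exact (hmin u ⟨huC, huΛ, hlt.le.trans hxy, hu⟩).not_gt hlt
  have ha := hpos a haC ha0
  have hb := hpos b hbC hb0
  rw [dot_add_left] at hsmaller
  exact hx (add_mem (hsmaller a haC haΛ (by linarith)) (hsmaller b hbC hbΛ (by linarith)))

lemma exists_hilbertRepLengths_le (s : Fin n → ℝ)
    (hpos : ∀ y ∈ C, y ≠ 0 → 0 < dot y s)
    (hfin : ∀ M, {y | y ∈ C ∧ y ∈ Λ ∧ dot y s ≤ M}.Finite)
    {M : ℝ} (hM : ∀ h, IsHilbertL Λ C h → dot h s ≤ M) :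
    ∃ N, ∀ z ∈ C, z ∈ Λ → ∃ q ∈ hilbertRepLengths Λ C z, q ≤ N := by
  have hfinH : {h | IsHilbertL Λ C h}.Finite :=
    (hfin M).subset fun h hh => ⟨hh.1, hh.2.1, hM h hh⟩
  obtain ⟨N, e, he⟩ := hfinH.fin_embedding
  refine ⟨N, fun z hzC hzΛ => ⟨N, ?_, le_rfl⟩⟩
  have hz := mem_closure_isHilbertL s hpos hfin hzC hzΛ
  rw [← he, AddSubmonoid.mem_closure_range_iff_of_fintype] at hz
  obtain ⟨c, rfl⟩ := hz
  refine ⟨e, c, fun t => ?_, by simp only [Nat.cast_smul_eq_nsmul]⟩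
  have ht : e t ∈ range e := Set.mem_range_self t
  rwa [he] at ht

end HilbertRepresentation

section PrimitiveScale

/-- `c • v` is the primitive lattice vector on the ray `ℝ≥0 • v`. -/
structure IsPrimitiveScale (v : Fin n → ℝ) (c : ℝ) : Prop where
  pos : 0 < c
  isIntegral_smul : IsIntegral (c • v)
  le_of_isIntegral_smul : ∀ t, 0 < t → IsIntegral (t • v) → c ≤ t

variable {v : Fin n → ℝ} {c : ℝ}

lemma exists_isPrimitiveScale (hv : IsIntegral v) (hv0 : v ≠ 0) : ∃ c, IsPrimitiveScale v c := by
  classical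
  obtain ⟨a, ha⟩ : ∃ a, v a ≠ 0 := by
    by_contra! h
    exact hv0 (funext h)
  obtain ⟨m, hm⟩ := hv a
  -- a multiple `t • v` is integral only if `t * |m|` is an integer, so we search among `k / |m|`
  have hM : ((m.natAbs : ℕ) : ℝ) = |v a| := by rw [hm, Nat.cast_natAbs, Int.cast_abs]
  have hMpos : (0 : ℝ) < m.natAbs := hM ▸ abs_pos.mpr ha
  have hex : ∃ k : ℕ, 0 < k ∧ IsIntegral (((k : ℝ) / m.natAbs) • v) :=
    ⟨m.natAbs, by exact_mod_cast hMpos, by rwa [div_self hMpos.ne', one_smul]⟩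
  refine ⟨Nat.find hex / m.natAbs, div_pos (by exact_mod_cast (Nat.find_spec hex).1) hMpos,
    (Nat.find_spec hex).2, fun t ht htv => ?_⟩
  obtain ⟨p, hp⟩ := htv a
  have htM : t * m.natAbs = p.natAbs := by
    rw [hM, Nat.cast_natAbs, Int.cast_abs, ← hp, Pi.smul_apply, smul_eq_mul, abs_mul,
      abs_of_pos ht]
  have hp0 : 0 < p.natAbs := by
    have : (0 : ℝ) < p.natAbs := htM ▸ mul_pos ht hMpos
    exact_mod_cast this
  have hk : Nat.find hex ≤ p.natAbs :=
    Nat.find_min' hex ⟨hp0, by rwa [← htM, mul_div_cancel_right₀ _ hMpos.ne']⟩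
  rw [div_le_iff₀ hMpos, htM]
  exact_mod_cast hk

lemma IsPrimitiveScale.le_one (hc : IsPrimitiveScale v c) (hv : IsIntegral v) : c ≤ 1 :=
  hc.le_of_isIntegral_smul 1 one_pos (by rwa [one_smul])

lemma IsPrimitiveScale.exists_int_eq_mul (hc : IsPrimitiveScale v c) {t : ℝ}
    (ht : IsIntegral (t • v)) : ∃ m : ℤ, t = m * c := by
  refine ⟨⌊t / c⌋, ?_⟩
  have hrem : t - ⌊t / c⌋ * c = c * Int.fract (t / c) := by
    rw [Int.fract, mul_sub, mul_div_cancel₀ _ hc.pos.ne']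
    ring
  have hint : IsIntegral ((t - ⌊t / c⌋ * c) • v) := by
    rw [sub_smul, mul_smul]
    exact ht.sub (hc.isIntegral_smul.intCast_smul _)
  by_contra hne
  have hpos : 0 < t - ⌊t / c⌋ * c :=
    lt_of_le_of_ne (hrem ▸ mul_nonneg hc.pos.le (Int.fract_nonneg _))
      (Ne.symm (sub_ne_zero.mpr hne))
  have hle := hc.le_of_isIntegral_smul _ hpos hint
  rw [hrem] at hle
  nlinarith [Int.fract_lt_one (t / c), hc.pos]

end PrimitiveScale

lemma pos_subset_span {ι : Type} [Fintype ι] (r : ι → Fin n → ℝ) :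
    pos r ⊆ span ℝ (range r) := by
  rintro x ⟨c, -, rfl⟩
  exact sum_mem fun l _ => smul_mem _ _ (subset_span (mem_range_self l))

section Coordinates

variable {k : ℕ} {r rstar : Fin k → Fin n → ℝ}
  (hdual : ∀ l j, dot (r l) (rstar j) = if l = j then 1 else 0)
include hdual

lemma dot_sum_smul_rstar (c : Fin k → ℝ) (t : Fin k) : dot (∑ l, c l • r l) (rstar t) = c t := by
  simp [dot_sum_left, dot_smul_left, hdual]

lemma eq_sum_dot_rstar_smul {x : Fin n → ℝ} (hx : x ∈ span ℝ (range r)) :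
    x = ∑ l, dot x (rstar l) • r l := by
  obtain ⟨c, rfl⟩ := (mem_span_range_iff_exists_fun ℝ).mp hx
  simp only [dot_sum_smul_rstar hdual]

lemma mem_pos_iff {x : Fin n → ℝ} :
    x ∈ pos r ↔ x ∈ span ℝ (range r) ∧ ∀ l, 0 ≤ dot x (rstar l) := by
  refine ⟨fun hx => ⟨pos_subset_span r hx, ?_⟩, fun ⟨hx, hnn⟩ =>
    ⟨_, hnn, eq_sum_dot_rstar_smul hdual hx⟩⟩
  obtain ⟨c, hc, rfl⟩ := hx
  simpa only [dot_sum_smul_rstar hdual] using hc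

lemma ne_zero_of_dual (i : Fin k) : r i ≠ 0 := by
  intro h
  simpa [h, dot] using hdual i i

lemma eq_dot_rstar_smul_of_forall_ne {i : Fin k} {x : Fin n → ℝ} (hx : x ∈ span ℝ (range r))
    (h0 : ∀ l ≠ i, dot x (rstar l) = 0) : x = dot x (rstar i) • r i := by
  conv_lhs => rw [eq_sum_dot_rstar_smul hdual hx]
  exact Finset.sum_eq_single i (fun l _ hl => by rw [h0 l hl, zero_smul]) (by simp)

lemma finite_pos_isIntegral_dot_rstar_le (K : ℝ) :
    {g | g ∈ pos r ∧ IsIntegral g ∧ ∀ l, dot g (rstar l) ≤ K}.Finite := by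
  refine (finite_isIntegral_abs_le fun a => K * ∑ l, |r l a|).subset ?_
  rintro _ ⟨⟨lam, hlam, rfl⟩, hgint, hgK⟩
  refine ⟨hgint, fun a => ?_⟩
  simp only [dot_sum_smul_rstar hdual] at hgK
  rw [Finset.sum_apply, Finset.mul_sum]
  refine (Finset.abs_sum_le_sum_abs _ _).trans (Finset.sum_le_sum fun l _ => ?_)
  rw [Pi.smul_apply, smul_eq_mul, abs_mul, abs_of_nonneg (hlam l)]
  exact mul_le_mul_of_nonneg_right (hgK l) (abs_nonneg _)

end Coordinates

lemma sub_mem_dualLattice_comm {Λ : Set (Fin n → ℝ)} {a b : Fin n → ℝ}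
    (h : a - b ∈ dualLattice Λ) : b - a ∈ dualLattice Λ := by
  refine ⟨by rw [← neg_sub]; exact neg_mem h.1, fun y hy => ?_⟩
  obtain ⟨m, hm⟩ := h.2 y hy
  refine ⟨-m, ?_⟩
  rw [dot_sub_right] at hm ⊢
  push_cast
  linarith

lemma dot_le_of_sub_mem_dualLattice {Λ : Set (Fin n → ℝ)} {a b g : Fin n → ℝ}
    (h : a - b ∈ dualLattice Λ) (hg : g ∈ Λ) (hb : 0 ≤ dot g b) (ha : dot g a < 1) :
    dot g a ≤ dot g b := by
  obtain ⟨m, hm⟩ := h.2 g hg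
  rw [dot_sub_right] at hm
  have hm1 : m < 1 := by exact_mod_cast (by linarith : (m : ℝ) < 1)
  have hm0 : (m : ℝ) ≤ 0 := by exact_mod_cast (by omega : m ≤ 0)
  linarith

section ProjectedCone

variable {k : ℕ} {r rstar : Fin k → Fin n → ℝ}
  (hdual : ∀ l j, dot (r l) (rstar j) = if l = j then 1 else 0) (i : Fin k)
include hdual

lemma dot_projPerp_rstar (x : Fin n → ℝ) {l : Fin k} (hl : l ≠ i) :
    dot (projPerp (r i) x) (rstar l) = dot x (rstar l) := by
  rw [dot_projPerp, hdual i l, if_neg hl.symm, mul_zero, sub_zero]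

lemma projPerp_eq_zero_iff {x : Fin n → ℝ} (hx : x ∈ span ℝ (range r)) :
    projPerp (r i) x = 0 ↔ ∀ l ≠ i, dot x (rstar l) = 0 := by
  refine ⟨fun h0 l hl => ?_, fun h0 => ?_⟩
  · rw [← dot_projPerp_rstar hdual i x hl, h0, dot_zero_left]
  · rw [eq_dot_rstar_smul_of_forall_ne hdual hx h0]
    exact projPerp_smul_self (ne_zero_of_dual hdual i) _

lemma eq_dot_rstar_smul_of_projPerp_eq_zero {x : Fin n → ℝ} (hx : x ∈ span ℝ (range r))
    (h0 : projPerp (r i) x = 0) : x = dot x (rstar i) • r i :=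
  eq_dot_rstar_smul_of_forall_ne hdual hx ((projPerp_eq_zero_iff hdual i hx).mp h0)

lemma dot_rstar_nonneg_of_mem_image_pos {y : Fin n → ℝ} (hy : y ∈ projPerp (r i) '' pos r)
    {l : Fin k} (hl : l ≠ i) : 0 ≤ dot y (rstar l) := by
  obtain ⟨x, hx, rfl⟩ := hy
  rw [dot_projPerp_rstar hdual i x hl]
  exact ((mem_pos_iff hdual).mp hx).2 l

lemma eq_zero_of_mem_image_pos {y : Fin n → ℝ} (hy : y ∈ projPerp (r i) '' pos r)
    (h0 : ∀ l ≠ i, dot y (rstar l) = 0) : y = 0 := by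
  obtain ⟨x, hx, rfl⟩ := hy
  refine (projPerp_eq_zero_iff hdual i (pos_subset_span r hx)).mpr fun l hl => ?_
  rw [← dot_projPerp_rstar hdual i x hl, h0 l hl]

lemma dot_rstar_le_one_of_isHilbertL (hint : ∀ l, IsIntegral (r l)) {h : Fin n → ℝ}
    (hh : IsHilbertL (projPerp (r i) '' latticeOf r) (projPerp (r i) '' pos r) h)
    {l : Fin k} (hl : l ≠ i) : dot h (rstar l) ≤ 1 := by
  by_contra! hgt
  obtain ⟨⟨x, hx, rfl⟩, ⟨u, ⟨hu, huint⟩, hux⟩, -, hsplit⟩ := hh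
  rw [dot_projPerp_rstar hdual i x hl] at hgt
  have hrl : r l ∈ span ℝ (range r) := subset_span (mem_range_self l)
  have hrl_one : dot (projPerp (r i) (r l)) (rstar l) = 1 := by
    rw [dot_projPerp_rstar hdual i _ hl, hdual, if_pos rfl]
  -- `h - π (r l)` is again a nonzero point of the projected cone, so `h` splits
  refine hsplit (projPerp (r i) (r l)) (projPerp (r i) (x - r l)) ⟨r l, ?_, rfl⟩ ⟨x - r l, ?_, rfl⟩
    ⟨r l, ⟨hrl, hint l⟩, rfl⟩ ⟨u - r l, ⟨sub_mem hu hrl, huint.sub (hint l)⟩, ?_⟩ ?_ ?_ ?_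
  · refine (mem_pos_iff hdual).mpr ⟨hrl, fun t => ?_⟩
    rw [hdual]
    split_ifs <;> norm_num
  · refine (mem_pos_iff hdual).mpr ⟨sub_mem (pos_subset_span r hx) hrl, fun t => ?_⟩
    rw [dot_sub_left, hdual]
    split_ifs with htl
    · subst htl
      linarith
    · simpa using ((mem_pos_iff hdual).mp hx).2 t
  · rw [projPerp_sub, projPerp_sub, hux]
  · intro h0
    rw [h0, dot_zero_left] at hrl_one
    exact zero_ne_one hrl_one
  · intro h0
    have := dot_projPerp_rstar hdual i (x - r l) hl
    rw [h0, dot_zero_left, dot_sub_left, hdual, if_pos rfl] at this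
    linarith
  · rw [projPerp_sub, add_sub_cancel]

variable {c : ℝ}

lemma le_dot_rstar_of_projPerp_eq_zero (hc : IsPrimitiveScale (r i) c) {a : Fin n → ℝ}
    (ha : a ∈ pos r) (haint : IsIntegral a) (ha0 : a ≠ 0) (h0 : projPerp (r i) a = 0) :
    c ≤ dot a (rstar i) := by
  have hray := eq_dot_rstar_smul_of_projPerp_eq_zero hdual i (pos_subset_span r ha) h0
  refine hc.le_of_isIntegral_smul _ (lt_of_le_of_ne (((mem_pos_iff hdual).mp ha).2 i) fun h => ?_)
    (by rwa [hray] at haint)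
  exact ha0 (by rw [hray, ← h, zero_smul])

lemma exists_lift (hc : IsPrimitiveScale (r i) c) {y : Fin n → ℝ}
    (hyC : y ∈ projPerp (r i) '' pos r) (hyΛ : y ∈ projPerp (r i) '' latticeOf r) :
    ∃ g ∈ pos r, IsIntegral g ∧ projPerp (r i) g = y ∧ dot g (rstar i) < c := by
  obtain ⟨x, hx, rfl⟩ := hyC
  obtain ⟨u, ⟨hu, huint⟩, hux⟩ := hyΛ
  -- reduce `u` modulo the primitive vector `c • r i`
  set m : ℤ := ⌊dot u (rstar i) / c⌋
  have hπ : projPerp (r i) (u - (m * c) • r i) = projPerp (r i) x := by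
    rw [projPerp_sub, projPerp_smul_self (ne_zero_of_dual hdual i), sub_zero, hux]
  have hgi : dot (u - (m * c) • r i) (rstar i) = c * Int.fract (dot u (rstar i) / c) := by
    rw [dot_sub_left, dot_smul_left, hdual, if_pos rfl, Int.fract, mul_sub,
      mul_div_cancel₀ _ hc.pos.ne']
    ring
  refine ⟨u - (m * c) • r i, (mem_pos_iff hdual).mpr ⟨?_, fun l => ?_⟩, ?_, hπ, ?_⟩
  · exact sub_mem hu (smul_mem _ _ (subset_span (mem_range_self i)))
  · rcases eq_or_ne l i with rfl | hl
    · rw [hgi]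
      exact mul_nonneg hc.pos.le (Int.fract_nonneg _)
    · rw [← dot_projPerp_rstar hdual i _ hl, hπ]
      exact dot_rstar_nonneg_of_mem_image_pos hdual i ⟨x, hx, rfl⟩ hl
  · rw [mul_smul]
    exact huint.sub (hc.isIntegral_smul.intCast_smul m)
  · rw [hgi]
    exact mul_lt_of_lt_one_right hc.pos (Int.fract_lt_one _)

lemma isHilbertL_primitive (hc : IsPrimitiveScale (r i) c) :
    IsHilbertL (intLattice n) (pos r) (c • r i) := by
  have hci : ∀ l, dot (c • r i) (rstar l) = if i = l then c else 0 := by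
    intro l
    rw [dot_smul_left, hdual]
    split_ifs <;> simp
  refine ⟨(mem_pos_iff hdual).mpr ⟨smul_mem _ _ (subset_span (mem_range_self i)), fun l => ?_⟩,
    hc.isIntegral_smul, smul_ne_zero hc.pos.ne' (ne_zero_of_dual hdual i), ?_⟩
  · rw [hci]
    split_ifs
    exacts [hc.pos.le, le_rfl]
  rintro a b ha hb haint hbint ha0 hb0 hab
  have hray : ∀ x ∈ pos r, ∀ y ∈ pos r, c • r i = x + y → projPerp (r i) x = 0 := by
    intro x hx y hy hxy
    refine (projPerp_eq_zero_iff hdual i (pos_subset_span r hx)).mpr fun l hl => ?_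
    have hsum : dot x (rstar l) + dot y (rstar l) = 0 := by
      rw [← dot_add_left, ← hxy, hci, if_neg hl.symm]
    linarith [((mem_pos_iff hdual).mp hx).2 l, ((mem_pos_iff hdual).mp hy).2 l]
  have hai := le_dot_rstar_of_projPerp_eq_zero hdual i hc ha haint ha0 (hray a ha b hb hab)
  have hbi := le_dot_rstar_of_projPerp_eq_zero hdual i hc hb hbint hb0
    (hray b hb a ha (hab.trans (add_comm a b)))
  have hsum : dot a (rstar i) + dot b (rstar i) = c := by
    rw [← dot_add_left, ← hab, hci, if_pos rfl]
  linarith [hc.pos]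

lemma isHilbertL_of_lift (hc : IsPrimitiveScale (r i) c) {g : Fin n → ℝ} (hg : g ∈ pos r)
    (hgint : IsIntegral g)
    (hh : IsHilbertL (projPerp (r i) '' latticeOf r) (projPerp (r i) '' pos r) (projPerp (r i) g))
    (hgi : dot g (rstar i) < c) : IsHilbertL (intLattice n) (pos r) g := by
  refine ⟨hg, hgint, fun h0 => hh.2.2.1 (by rw [h0, projPerp_zero]), ?_⟩
  rintro a b ha hb haint hbint ha0 hb0 rfl
  -- otherwise `π a + π b` would split the Hilbert basis element `π (a + b)`
  have hzero : projPerp (r i) a = 0 ∨ projPerp (r i) b = 0 := by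
    by_contra! hne
    exact hh.2.2.2 _ _ ⟨a, ha, rfl⟩ ⟨b, hb, rfl⟩ ⟨a, ⟨pos_subset_span r ha, haint⟩, rfl⟩
      ⟨b, ⟨pos_subset_span r hb, hbint⟩, rfl⟩ hne.1 hne.2 (projPerp_add _ _ _)
  have hai := ((mem_pos_iff hdual).mp ha).2 i
  have hbi := ((mem_pos_iff hdual).mp hb).2 i
  rw [dot_add_left] at hgi
  rcases hzero with h0 | h0
  · linarith [le_dot_rstar_of_projPerp_eq_zero hdual i hc ha haint ha0 h0]
  · linarith [le_dot_rstar_of_projPerp_eq_zero hdual i hc hb hbint hb0 h0]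

lemma exists_nat_smul_primitive (hc : IsPrimitiveScale (r i) c) {w : Fin n → ℝ}
    (hw : w ∈ span ℝ (range r)) (hwint : IsIntegral w) (h0 : projPerp (r i) w = 0)
    (hnn : 0 ≤ dot w (rstar i)) : ∃ N : ℕ, w = (N : ℝ) • (c • r i) := by
  have hray := eq_dot_rstar_smul_of_projPerp_eq_zero hdual i hw h0
  obtain ⟨m, hm⟩ := hc.exists_int_eq_mul (by rwa [hray] at hwint)
  have hm0 : 0 ≤ m := by
    have : (0 : ℝ) ≤ m := nonneg_of_mul_nonneg_left (hm ▸ hnn) hc.pos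
    exact_mod_cast this
  lift m to ℕ using hm0
  exact ⟨m, by rw [hray, hm, smul_smul, Int.cast_natCast]⟩

lemma dot_sum_rstar_pos {y : Fin n → ℝ} (hy : y ∈ projPerp (r i) '' pos r) (hy0 : y ≠ 0) :
    0 < dot y (∑ l ∈ Finset.univ.erase i, rstar l) := by
  rw [dot_sum_right]
  have hnn : ∀ l ∈ Finset.univ.erase i, 0 ≤ dot y (rstar l) := fun l hl =>
    dot_rstar_nonneg_of_mem_image_pos hdual i hy (Finset.ne_of_mem_erase hl)
  refine (Finset.sum_nonneg hnn).lt_of_ne fun h => hy0 ?_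
  refine eq_zero_of_mem_image_pos hdual i hy fun l hl => ?_
  exact (Finset.sum_eq_zero_iff_of_nonneg hnn).mp h.symm l
    (Finset.mem_erase.mpr ⟨hl, Finset.mem_univ l⟩)

lemma finite_projPerp_dot_sum_rstar_le (hc : IsPrimitiveScale (r i) c) (M : ℝ) :
    {y | y ∈ projPerp (r i) '' pos r ∧ y ∈ projPerp (r i) '' latticeOf r ∧
      dot y (∑ l ∈ Finset.univ.erase i, rstar l) ≤ M}.Finite := by
  refine ((finite_pos_isIntegral_dot_rstar_le hdual (max M c)).image (projPerp (r i))).subset ?_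
  rintro y ⟨hyC, hyΛ, hyM⟩
  obtain ⟨g, hg, hgint, rfl, hgi⟩ := exists_lift hdual i hc hyC hyΛ
  refine ⟨g, ⟨hg, hgint, fun l => ?_⟩, rfl⟩
  rcases eq_or_ne l i with rfl | hl
  · exact hgi.le.trans (le_max_right _ _)
  rw [← dot_projPerp_rstar hdual i g hl]
  refine le_trans ?_ (hyM.trans (le_max_left _ _))
  rw [dot_sum_right]
  exact Finset.single_le_sum (fun l' hl' => dot_rstar_nonneg_of_mem_image_pos hdual i hyC
    (Finset.ne_of_mem_erase hl')) (Finset.mem_erase.mpr ⟨hl, Finset.mem_univ l⟩)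

lemma exists_hilbertRepLengths_projPerp_le (hint : ∀ l, IsIntegral (r l))
    (hc : IsPrimitiveScale (r i) c) :
    ∃ N, ∀ y ∈ projPerp (r i) '' pos r, y ∈ projPerp (r i) '' latticeOf r →
      ∃ q ∈ hilbertRepLengths (projPerp (r i) '' latticeOf r) (projPerp (r i) '' pos r) y,
        q ≤ N := by
  refine exists_hilbertRepLengths_le _ (fun y hy hy0 => dot_sum_rstar_pos hdual i hy hy0)
    (finite_projPerp_dot_sum_rstar_le hdual i hc) (M := k) fun h hh => ?_
  rw [dot_sum_right]
  calc ∑ l ∈ Finset.univ.erase i, dot h (rstar l)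
      ≤ ∑ l ∈ Finset.univ.erase i, (1 : ℝ) := Finset.sum_le_sum fun l hl =>
        dot_rstar_le_one_of_isHilbertL hdual i hint hh (Finset.ne_of_mem_erase hl)
    _ ≤ k := by
      rw [Finset.sum_const, nsmul_one]
      exact_mod_cast Finset.card_erase_le.trans (by simp)

lemma dot_rstar_sub_sum_nonneg (hint : ∀ l, IsIntegral (r l)) (hc : IsPrimitiveScale (r i) c)
    {j : Fin k} (hij : i ≠ j) (hmem : rstar i - rstar j ∈ dualLattice (latticeOf r))
    {z : Fin n → ℝ} (hz : z ∈ pos r) (hle : dot z (rstar j) ≤ dot z (rstar i))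
    {q : ℕ} (m : Fin q → ℕ) {g : Fin q → Fin n → ℝ} (hg : ∀ t, g t ∈ pos r)
    (hgint : ∀ t, IsIntegral (g t)) (hgi : ∀ t, dot (g t) (rstar i) < c)
    (h0 : projPerp (r i) (z - ∑ t, (m t : ℝ) • g t) = 0) :
    0 ≤ dot (z - ∑ t, (m t : ℝ) • g t) (rstar i) := by
  have hGspan : ∑ t, (m t : ℝ) • g t ∈ span ℝ (range r) :=
    sum_mem fun t _ => smul_mem _ _ (pos_subset_span r (hg t))
  have hj := (projPerp_eq_zero_iff hdual i (sub_mem (pos_subset_span r hz) hGspan)).mp h0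
    j hij.symm
  have hgij : ∀ t, dot (g t) (rstar i) ≤ dot (g t) (rstar j) := fun t =>
    dot_le_of_sub_mem_dualLattice hmem ⟨pos_subset_span r (hg t), hgint t⟩
      (((mem_pos_iff hdual).mp (hg t)).2 j) ((hgi t).trans_le (hc.le_one (hint i)))
  have hGij : ∑ t, (m t : ℝ) * dot (g t) (rstar i) ≤ ∑ t, (m t : ℝ) * dot (g t) (rstar j) :=
    Finset.sum_le_sum fun t _ => mul_le_mul_of_nonneg_left (hgij t) (Nat.cast_nonneg _)
  simp only [dot_sub_left, dot_sum_left, dot_smul_left] at hj ⊢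
  linarith

lemma succ_mem_hilbertRepLengths (hint : ∀ l, IsIntegral (r l)) (hc : IsPrimitiveScale (r i) c)
    {j : Fin k} (hij : i ≠ j) (hmem : rstar i - rstar j ∈ dualLattice (latticeOf r))
    {z : Fin n → ℝ} (hz : z ∈ pos r) (hzint : IsIntegral z)
    (hle : dot z (rstar j) ≤ dot z (rstar i)) {q : ℕ}
    (hq : q ∈ hilbertRepLengths (projPerp (r i) '' latticeOf r) (projPerp (r i) '' pos r)
      (projPerp (r i) z)) :
    q + 1 ∈ hilbertRepLengths (intLattice n) (pos r) z := by
  obtain ⟨h, m, hH, hrep⟩ := hq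
  choose g hg hgint hgπ hgi using fun t => exists_lift hdual i hc (hH t).1 (hH t).2.1
  set G := ∑ t, (m t : ℝ) • g t with hG
  have hw0 : projPerp (r i) (z - G) = 0 := by
    rw [projPerp_sub, hG, projPerp_sum, hrep, sub_eq_zero]
    simp only [projPerp_smul, hgπ]
  obtain ⟨N, hN⟩ := exists_nat_smul_primitive hdual i hc
    (sub_mem (pos_subset_span r hz) (sum_mem fun t _ => smul_mem _ _ (pos_subset_span r (hg t))))
    (hzint.sub (IsIntegral.sum_natCast_smul _ m hgint)) hw0
    (dot_rstar_sub_sum_nonneg hdual i hint hc hij hmem hz hle m hg hgint hgi hw0)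
  have hHilb : ∀ t, IsHilbertL (intLattice n) (pos r)
      (Fin.snoc (α := fun _ => Fin n → ℝ) g (c • r i) t) := by
    refine Fin.lastCases (by simpa only [Fin.snoc_last] using isHilbertL_primitive hdual i hc)
      fun t => by simpa only [Fin.snoc_castSucc] using
        isHilbertL_of_lift hdual i hc (hg t) (hgint t) (hgπ t ▸ hH t) (hgi t)
  refine ⟨_, Fin.snoc m N, hHilb, ?_⟩
  rw [Fin.sum_univ_castSucc]
  simp only [Fin.snoc_castSucc, Fin.snoc_last]
  rw [← hG, ← hN, add_sub_cancel]

end ProjectedCone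

lemma sInf_hilbertRepLengths_le_ICRL_projPerp_add_one {k : ℕ} {r rstar : Fin k → Fin n → ℝ}
    (hint : ∀ l, IsIntegral (r l))
    (hdual : ∀ l j, dot (r l) (rstar j) = if l = j then 1 else 0) {i j : Fin k} (hij : i ≠ j)
    (hmem : rstar i - rstar j ∈ dualLattice (latticeOf r))
    {z : Fin n → ℝ} (hz : z ∈ pos r) (hzint : IsIntegral z)
    (hle : dot z (rstar j) ≤ dot z (rstar i)) :
    sInf (hilbertRepLengths (intLattice n) (pos r) z) ≤
      ICRL (projPerp (r i) '' latticeOf r) (projPerp (r i) '' pos r) + 1 := by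
  obtain ⟨c, hc⟩ := exists_isPrimitiveScale (hint i) (ne_zero_of_dual hdual i)
  obtain ⟨N, hN⟩ := exists_hilbertRepLengths_projPerp_le hdual i hint hc
  have hzC : projPerp (r i) z ∈ projPerp (r i) '' pos r := ⟨z, hz, rfl⟩
  have hzΛ : projPerp (r i) z ∈ projPerp (r i) '' latticeOf r :=
    ⟨z, ⟨pos_subset_span r hz, hzint⟩, rfl⟩
  obtain ⟨q, hq, -⟩ := hN _ hzC hzΛ
  calc sInf (hilbertRepLengths (intLattice n) (pos r) z)
      ≤ sInf (hilbertRepLengths (projPerp (r i) '' latticeOf r) (projPerp (r i) '' pos r)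
          (projPerp (r i) z)) + 1 :=
        Nat.sInf_le (succ_mem_hilbertRepLengths hdual i hint hc hij hmem hz hzint hle
          (Nat.sInf_mem ⟨q, hq⟩))
    _ ≤ _ := Nat.add_le_add_right (sInf_hilbertRepLengths_le_ICRL hN hzC hzΛ) 1

theorem stmt_8_general {n k : ℕ} (r : Fin k → (Fin n → ℝ))
    (hint : ∀ i, IsIntegral (r i))
    (rstar : Fin k → (Fin n → ℝ))
    (hdual : ∀ l j, dot (r l) (rstar j) = if l = j then 1 else 0)
    (i j : Fin k) (hij : i ≠ j)
    (hmem : rstar i - rstar j ∈ dualLattice (latticeOf r)) :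
    ICR (pos r) ≤
      max (ICRL (projPerp (r i) '' latticeOf r) (projPerp (r i) '' pos r))
          (ICRL (projPerp (r j) '' latticeOf r) (projPerp (r j) '' pos r)) + 1 := by
  refine ICRL_le_of_forall fun z hz hzint => ?_
  rcases le_total (dot z (rstar j)) (dot z (rstar i)) with hle | hle
  · exact (sInf_hilbertRepLengths_le_ICRL_projPerp_add_one hint hdual hij hmem hz hzint hle).trans
      (Nat.add_le_add_right (le_max_left _ _) 1)
  · exact (sInf_hilbertRepLengths_le_ICRL_projPerp_add_one hint hdual hij.symm
      (sub_mem_dualLattice_comm hmem) hz hzint hle).trans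
      (Nat.add_le_add_right (le_max_right _ _) 1)

/-- if `(r^i)* − (r^j)* ∈ (L ∩ ℤ^n)*`, then `ICR(pos r)` is at most one more
than the maximum of the Carathéodory ranks of the two projected cones, taken with respect
to the projected lattices. -/
theorem stmt_8 {n k : ℕ} (r : Fin k → (Fin n → ℝ))
    (hint : ∀ i, IsIntegral (r i)) (hli : LinearIndependent ℝ r)
    (rstar : Fin k → (Fin n → ℝ))
    (hspan : ∀ j, rstar j ∈ Submodule.span ℝ (Set.range r))
    (hdual : ∀ l j, dot (r l) (rstar j) = if l = j then 1 else 0)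
    (i j : Fin k) (hij : i ≠ j)
    (hmem : rstar i - rstar j ∈ dualLattice (latticeOf r)) :
    ICR (pos r) ≤
      max (ICRL (projPerp (r i) '' latticeOf r) (projPerp (r i) '' pos r))
          (ICRL (projPerp (r j) '' latticeOf r) (projPerp (r j) '' pos r)) + 1 :=
  stmt_8_general r hint rstar hdual i j hij hmem

end ICRPaper
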